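/- arXiv:2407.13318 — 4 statements merged into one kernel-verified Lean document; each statement's English description precedes it below -/
import Mathlib

section
/- Let n ≥ 1 and let I ≥ 1, δ ≥ 1 be natural numbers. Fix a secret vector a ∈ ℤⁿ with |a_k| ≤ I for all k, and let a′ be drawn uniformly at random from the box B((δ+1)I) = {v ∈ ℤⁿ : |v_k| ≤ (δ+1)I for all k}. Set γ = a′ − a. Then for every z ∈ ℤⁿ with |z_k| ≤ δI for all k, the probability that γ = z equals (2(δ+1)I + 1)^{−n}; in particular this probability does not depend on the choice of the secret a. -/
/-- The sup-norm box `B(I) = {v ∈ ℤⁿ : |v k| ≤ I for all k}` as a finite set. -/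
noncomputable def box (n I : ℕ) : Finset (Fin n → ℤ) :=
  Fintype.piFinset fun _ => Finset.Icc (-(I : ℤ)) (I : ℤ)

lemma box_nonempty (n I : ℕ) : (box n I).Nonempty :=
  ⟨0, Fintype.mem_piFinset.mpr fun _ => Finset.mem_Icc.mpr
    ⟨by simp, by simp⟩⟩

lemma box_card (n I : ℕ) : (box n I).card = (2 * I + 1) ^ n := by
  simp [box, Fintype.card_piFinset, Int.card_Icc]
  congr 1
  omega

/-- if `a ∈ B(I)` is the secret and `a′` is drawn uniformly from `B((δ+1)I)`,
then for every `z` with `|z k| ≤ δI` for all `k`, the probability that `γ = a′ - a`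
equals `z` is `(2(δ+1)I + 1)^{-n}`, independently of `a`. -/
theorem stmt_1 (n I δ : ℕ) (hn : 1 ≤ n) (hI : 1 ≤ I) (hδ : 1 ≤ δ)
    (a : Fin n → ℤ) (ha : ∀ k, |a k| ≤ (I : ℤ))
    (z : Fin n → ℤ) (hz : ∀ k, |z k| ≤ ((δ * I : ℕ) : ℤ)) :
    ((PMF.uniformOfFinset (box n ((δ + 1) * I)) (box_nonempty n ((δ + 1) * I))).map
        (fun a' => a' - a)) z
      = (((2 * ((δ + 1) * I) + 1 : ℕ) : ENNReal) ^ n)⁻¹ := by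
  have hmem : z + a ∈ box n ((δ + 1) * I) := by
    refine Fintype.mem_piFinset.mpr fun k => Finset.mem_Icc.mpr ?_
    have h1 := hz k
    have h2 := ha k
    have hb : |z k + a k| ≤ ((δ + 1) * I : ℕ) := by
      push_cast at h1 ⊢
      calc |z k + a k| ≤ |z k| + |a k| := abs_add_le _ _
        _ ≤ (δ : ℤ) * I + I := by linarith
        _ = ((δ : ℤ) + 1) * I := by ring
    simp only [Pi.add_apply]
    exact abs_le.mp hb
  rw [PMF.map_apply]
  rw [tsum_eq_single (z + a)]
  · rw [PMF.uniformOfFinset_apply, if_pos hmem, box_card]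
    push_cast
    simp
  · intro b hb
    rw [if_neg]
    intro h
    apply hb
    have : b - a = z := h.symm
    simp [← this]
end

section
/- Let n ≥ 1 and let I ≥ 1, δ ≥ 1 be natural numbers. Fix a ∈ ℤⁿ with |a_k| ≤ I for all k, and let a′ be drawn uniformly at random from the box B((δ+1)I). Then the probability that the rejection-sampling output γ = a′ − a is accepted, i.e. that |γ_k| ≤ δI for all k, equals ((2δI + 1)/(2(δ+1)I + 1))ⁿ; in particular the acceptance probability is the same for every admissible secret a. -/
/-- if `a ∈ B(I)` is the secret and `a′` is drawn uniformly from `B((δ+1)I)`,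
then the probability that `γ = a′ - a` is accepted (i.e. `|γ k| ≤ δI` for all `k`)
equals `((2δI + 1)/(2(δ+1)I + 1))ⁿ`, independently of the admissible secret `a`. -/
theorem stmt_2 (n I δ : ℕ) (hn : 1 ≤ n) (hI : 1 ≤ I) (hδ : 1 ≤ δ)
    (a : Fin n → ℤ) (ha : ∀ k, |a k| ≤ (I : ℤ)) :
    (PMF.uniformOfFinset (box n ((δ + 1) * I)) (box_nonempty n ((δ + 1) * I))).toOuterMeasure
        {a' | ∀ k, |a' k - a k| ≤ ((δ * I : ℕ) : ℤ)}
      = (((2 * (δ * I) + 1 : ℕ) : ENNReal) / ((2 * ((δ + 1) * I) + 1 : ℕ) : ENNReal)) ^ n := by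
  rw [PMF.toOuterMeasure_uniformOfFinset_apply]
  have hfilter : (box n ((δ + 1) * I)).filter
      (· ∈ {a' : Fin n → ℤ | ∀ k, |a' k - a k| ≤ ((δ * I : ℕ) : ℤ)})
      = Fintype.piFinset fun k => Finset.Icc (a k - (δ * I : ℕ)) (a k + (δ * I : ℕ)) := by
    ext v
    simp only [Finset.mem_filter, Fintype.mem_piFinset, box, Finset.mem_Icc,
      Set.mem_setOf_eq, abs_le]
    constructor
    · rintro ⟨h1, h2⟩ k
      have := h2 k
      omega
    · intro h
      refine ⟨fun k => ?_, fun k => ?_⟩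
      · have h1 := h k
        have hkI := abs_le.mp (ha k)
        push_cast at h1 ⊢
        constructor <;> nlinarith [h1.1, h1.2, hkI.1, hkI.2]
      · have := h k
        omega
  rw [Finset.filter_congr_decidable] at hfilter ⊢
  rw [hfilter, Fintype.card_piFinset]
  have hcard : ∀ k : Fin n, (Finset.Icc (a k - (δ * I : ℕ)) (a k + (δ * I : ℕ))).card
      = 2 * (δ * I) + 1 := by
    intro k
    rw [Int.card_Icc]
    omega
  simp only [hcard, Finset.prod_const, Finset.card_univ, Fintype.card_fin]
  rw [box_card]
  push_cast
  rw [div_eq_mul_inv, div_eq_mul_inv, mul_pow, ENNReal.inv_pow]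
end

section
/- Let n ≥ 1 and let I₀, I₁ be natural numbers with I₁ ≥ 1. Fix a secret vector a ∈ ℤⁿ with |a_k| ≤ I₀ for all k (a component of the signer's secret key), and let x be drawn uniformly at random from the box B(I₀ + I₁) = {v ∈ ℤⁿ : |v_k| ≤ I₀ + I₁ for all k}. Set y = x + a. Then for every z ∈ ℤⁿ with |z_k| ≤ I₁ for all k, the probability that y = z equals (2(I₀ + I₁) + 1)^{−n}, a value not depending on a. -/
/-- if the secret `a` satisfies `|a k| ≤ I₀` for all `k` and the masking
vector `x` is uniform on `B(I₀ + I₁)`, then for every `z` with `|z k| ≤ I₁` for all `k`,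
the probability that `y = x + a` equals `z` is `(2(I₀ + I₁) + 1)^{-n}`, a value not
depending on `a`. -/
theorem stmt_4 (n I₀ I₁ : ℕ) (hn : 1 ≤ n) (hI₁ : 1 ≤ I₁)
    (a : Fin n → ℤ) (ha : ∀ k, |a k| ≤ (I₀ : ℤ))
    (z : Fin n → ℤ) (hz : ∀ k, |z k| ≤ (I₁ : ℤ)) :
    ((PMF.uniformOfFinset (box n (I₀ + I₁)) (box_nonempty n (I₀ + I₁))).map
        (fun x => x + a)) z
      = (((2 * (I₀ + I₁) + 1 : ℕ) : ENNReal) ^ n)⁻¹ := by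
  have hmem : z - a ∈ box n (I₀ + I₁) := by
    refine Fintype.mem_piFinset.mpr fun k => Finset.mem_Icc.mpr ?_
    have h1 := abs_le.mp (ha k)
    have h2 := abs_le.mp (hz k)
    constructor <;> simp only [Pi.sub_apply] <;> push_cast <;> omega
  rw [PMF.map_apply]
  rw [tsum_eq_single (z - a)]
  · rw [if_pos (by abel), PMF.uniformOfFinset_apply, if_pos hmem, box_card]
    push_cast
    ring_nf
  · intro b hb
    rw [if_neg]
    intro h
    apply hb
    rw [h]; abel
end

section
/- Let n ≥ 1 and let I₀, I₁ be natural numbers with I₁ ≥ 1. Let a, a′ ∈ ℤⁿ be any two secret vectors with |a_k| ≤ I₀ and |a′_k| ≤ I₀ for all k, and let x be drawn uniformly at random from the box B(I₀ + I₁). Then the conditional distribution of x + a given {x + a ∈ B(I₁)} equals the conditional distribution of x + a′ given {x + a′ ∈ B(I₁)}; both equal the uniform distribution on B(I₁) = {v ∈ ℤⁿ : |v_k| ≤ I₁ for all k}. Hence the accepted response of the rejection-sampling step carries no information about which admissible secret vector was used. -/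
open scoped ENNReal


lemma mem_box {n I : ℕ} {v : Fin n → ℤ} : v ∈ box n I ↔ ∀ k, |v k| ≤ (I : ℤ) := by
  simp [box, Fintype.mem_piFinset, Finset.mem_Icc, abs_le, and_comm]

lemma map_add_apply (p : PMF (Fin n → ℤ)) (a b : Fin n → ℤ) :
    (p.map (fun x => x + a)) b = p (b - a) := by
  rw [PMF.map_apply, tsum_eq_single (b - a)]
  · simp
  · intro x hx
    rw [if_neg]
    intro h
    exact hx (by simp [h])

lemma key (n I₀ I₁ : ℕ) (a : Fin n → ℤ) (ha : ∀ k, |a k| ≤ (I₀ : ℤ)) (z : Fin n → ℤ) :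
    (((PMF.uniformOfFinset (box n (I₀ + I₁)) (box_nonempty n (I₀ + I₁))).map
          (fun x => x + a)).toOuterMeasure ({z} ∩ ↑(box n I₁)))
      / (((PMF.uniformOfFinset (box n (I₀ + I₁)) (box_nonempty n (I₀ + I₁))).map
          (fun x => x + a)).toOuterMeasure (↑(box n I₁) : Set (Fin n → ℤ)))
    = (PMF.uniformOfFinset (box n I₁) (box_nonempty n I₁)) z := by
  set P := PMF.uniformOfFinset (box n (I₀ + I₁)) (box_nonempty n (I₀ + I₁)) with hP
  have hsub : ∀ v : Fin n → ℤ, v ∈ box n I₁ → v - a ∈ box n (I₀ + I₁) := by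
    intro v hv
    rw [mem_box] at hv ⊢
    intro k
    calc |v k - a k| ≤ |v k| + |a k| := abs_sub _ _
    _ ≤ (I₁ : ℤ) + I₀ := add_le_add (hv k) (ha k)
    _ = ((I₀ + I₁ : ℕ) : ℤ) := by push_cast; ring
  have hc0 : ((box n (I₀ + I₁)).card : ℝ≥0∞) ≠ 0 := by
    simp [Finset.card_ne_zero_of_mem (box_nonempty n (I₀+I₁)).choose_spec]
  have hctop : ((box n (I₀ + I₁)).card : ℝ≥0∞) ≠ ⊤ := ENNReal.natCast_ne_top _
  have hm0 : ((box n I₁).card : ℝ≥0∞) ≠ 0 := by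
    simp [Finset.card_ne_zero_of_mem (box_nonempty n I₁).choose_spec]
  have hden : (P.map (fun x => x + a)).toOuterMeasure (↑(box n I₁) : Set (Fin n → ℤ))
      = ((box n I₁).card : ℝ≥0∞) * ((box n (I₀ + I₁)).card : ℝ≥0∞)⁻¹ := by
    rw [PMF.toOuterMeasure_apply_finset]
    rw [Finset.sum_congr rfl (fun v hv => ?_)]
    · rw [Finset.sum_const, nsmul_eq_mul]
    · rw [map_add_apply, hP, PMF.uniformOfFinset_apply, if_pos (hsub v hv)]
  by_cases hz : z ∈ box n I₁
  · have hnum : ({z} ∩ ↑(box n I₁) : Set (Fin n → ℤ)) = {z} := by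
      rw [Set.inter_eq_left]; simpa using hz
    rw [hnum, PMF.toOuterMeasure_apply_singleton, map_add_apply, hP,
      PMF.uniformOfFinset_apply, if_pos (hsub z hz), hden,
      PMF.uniformOfFinset_apply, if_pos hz]
    have hmtop : ((box n I₁).card : ℝ≥0∞) ≠ ⊤ := ENNReal.natCast_ne_top _
    rw [eq_comm, ENNReal.eq_div_iff (by simp [hm0, hctop])
      (by simp [ENNReal.mul_ne_top, hmtop, hc0]),
      mul_comm, ← mul_assoc, ENNReal.inv_mul_cancel hm0 hmtop, one_mul]
  · have hnum : ({z} ∩ ↑(box n I₁) : Set (Fin n → ℤ)) = ∅ := by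
      rw [Set.singleton_inter_eq_empty]; simpa using hz
    rw [hnum]
    simp [PMF.uniformOfFinset_apply, hz]

/-- for any two admissible secrets `a, a′ ∈ B(I₀)` and `x` uniform on
`B(I₀ + I₁)`, the conditional distribution of `x + a` given `{x + a ∈ B(I₁)}` coincides
with that of `x + a′` given `{x + a′ ∈ B(I₁)}`, and both equal the uniform distribution
on `B(I₁)`: the accepted response reveals nothing about which secret was used. -/
theorem stmt_5 (n I₀ I₁ : ℕ) (hn : 1 ≤ n) (hI₁ : 1 ≤ I₁)
    (a a' : Fin n → ℤ) (ha : ∀ k, |a k| ≤ (I₀ : ℤ)) (ha' : ∀ k, |a' k| ≤ (I₀ : ℤ)) :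
    ∀ z : Fin n → ℤ,
      ((((PMF.uniformOfFinset (box n (I₀ + I₁)) (box_nonempty n (I₀ + I₁))).map
              (fun x => x + a)).toOuterMeasure ({z} ∩ ↑(box n I₁)))
          / (((PMF.uniformOfFinset (box n (I₀ + I₁)) (box_nonempty n (I₀ + I₁))).map
              (fun x => x + a)).toOuterMeasure (↑(box n I₁) : Set (Fin n → ℤ)))
        = (((PMF.uniformOfFinset (box n (I₀ + I₁)) (box_nonempty n (I₀ + I₁))).map
              (fun x => x + a')).toOuterMeasure ({z} ∩ ↑(box n I₁)))
          / (((PMF.uniformOfFinset (box n (I₀ + I₁)) (box_nonempty n (I₀ + I₁))).map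
              (fun x => x + a')).toOuterMeasure (↑(box n I₁) : Set (Fin n → ℤ)))) ∧
      ((((PMF.uniformOfFinset (box n (I₀ + I₁)) (box_nonempty n (I₀ + I₁))).map
              (fun x => x + a)).toOuterMeasure ({z} ∩ ↑(box n I₁)))
          / (((PMF.uniformOfFinset (box n (I₀ + I₁)) (box_nonempty n (I₀ + I₁))).map
              (fun x => x + a)).toOuterMeasure (↑(box n I₁) : Set (Fin n → ℤ)))
        = (PMF.uniformOfFinset (box n I₁) (box_nonempty n I₁)) z) := by
  intro z
  exact ⟨(key n I₀ I₁ a ha z).trans (key n I₀ I₁ a' ha' z).symm, key n I₀ I₁ a ha z⟩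
end
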